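/- arXiv:2604.04336 — 4 statements merged into one kernel-verified Lean document; each statement's English description precedes it below -/
import Mathlib

section
/- Let r ≥ 2 be an integer and θ ∈ [0, π/2]. Then cos^r θ + ∑_{ℓ=2}^{r} (1/(r−1))^ℓ (ℓ−1) C(r,ℓ) cos^{r−ℓ}θ sin^ℓ θ ≤ 1. -/
/-!
Put `c = cos θ`, `s = sin θ`, `n = r - 1`. After substituting `x = s / n`, the sum is
`∑ (ℓ - 1) C(r, ℓ) c^(r-ℓ) x^ℓ`, which the binomial theorem and its derivative evaluate in closed
form; the left-hand side becomes `2 c^r + (s - c) (c + s/n)^n`.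
If `s ≤ c`, Bernoulli's bound `(c + s/n)^n ≥ c^n + c^(n-1) s` turns this into
`c^(n-1) (c² + s²) ≤ 1`. If `c ≤ s`, then `(c + s/n)^n ≤ c + s` (for `n ≥ 4` because `c + s/n ≤ 1`,
for `n ≤ 3` by a polynomial inequality), and with `c^r ≤ c²` the expression is at most
`2 c² + (s² - c²) = 1`.
-/

open Real Finset

theorem sum_range_mul_choose_mul_pow {R : Type*} [CommSemiring R] (m : ℕ) (x y : R) :
    ∑ ℓ ∈ range (m + 1), (ℓ : R) * m.choose ℓ * x ^ ℓ * y ^ (m - ℓ)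
      = m * x * (x + y) ^ (m - 1) := by
  rcases m with _ | m
  · simp
  have hterm : ∀ j ∈ range (m + 1),
      ((j + 1 : ℕ) : R) * (m + 1).choose (j + 1) * x ^ (j + 1) * y ^ (m + 1 - (j + 1))
        = (m + 1 : R) * x * (x ^ j * y ^ (m - j) * m.choose j) := by
    intro j _
    have hchoose : ((j + 1 : ℕ) : R) * (m + 1).choose (j + 1) = (m + 1 : R) * m.choose j := by
      rw [mul_comm]
      exact_mod_cast congrArg (Nat.cast : ℕ → R) (Nat.add_one_mul_choose_eq m j).symm
    rw [Nat.add_sub_add_right, hchoose]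
    ring
  rw [sum_range_succ', sum_congr rfl hterm, ← mul_sum, ← add_pow]
  simp

theorem sum_Icc_two_sub_one_mul_choose_mul_pow {R : Type*} [CommRing R] (r : ℕ) (c x : R) :
    ∑ ℓ ∈ Icc 2 r, ((ℓ : R) - 1) * r.choose ℓ * c ^ (r - ℓ) * x ^ ℓ
      = r * x * (x + c) ^ (r - 1) - (x + c) ^ r + c ^ r := by
  have hfull : ∑ ℓ ∈ range (r + 1), ((ℓ : R) - 1) * r.choose ℓ * c ^ (r - ℓ) * x ^ ℓ
      = r * x * (x + c) ^ (r - 1) - (x + c) ^ r := by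
    rw [← sum_range_mul_choose_mul_pow, add_pow, ← sum_sub_distrib]
    exact sum_congr rfl fun ℓ _ ↦ by ring
  rcases r with _ | r
  · simp
  rw [← sum_range_add_sum_Ico _ (by omega : 2 ≤ r + 1 + 1), Ico_add_one_right_eq_Icc] at hfull
  simp only [sum_range_succ, sum_range_zero, Nat.cast_zero, Nat.cast_one, Nat.choose_zero_right,
    Nat.choose_one_right, tsub_zero, add_tsub_cancel_right, sub_self, pow_zero, pow_one, zero_mul,
    mul_one, zero_add, add_zero] at hfull
  rw [Nat.add_sub_cancel]
  push_cast at hfull ⊢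
  linear_combination hfull

theorem pow_succ_add_mul_pow_le_add_pow {c t : ℝ} (hc : 0 ≤ c) (ht : 0 ≤ t) (n : ℕ) :
    c ^ (n + 1) + (n + 1) * c ^ n * t ≤ (c + t) ^ (n + 1) := by
  induction n with
  | zero => simp
  | succ n ih =>
    push_cast
    calc c ^ (n + 2) + (n + 1 + 1) * c ^ (n + 1) * t
        = (c ^ (n + 1) + (n + 1) * c ^ n * t) * (c + t) - (n + 1) * c ^ n * t ^ 2 := by ring
      _ ≤ (c ^ (n + 1) + (n + 1) * c ^ n * t) * (c + t) := by
          have : 0 ≤ (n + 1) * c ^ n * t ^ 2 := by positivity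
          linarith
      _ ≤ (c + t) ^ (n + 2) := by
          rw [pow_succ (c + t) (n + 1)]
          exact mul_le_mul_of_nonneg_right ih (by positivity)

section UnitCircle

variable {c s : ℝ}

theorem add_div_pow_le_add (hc : 0 ≤ c) (hcs : c ≤ s) (hunit : c ^ 2 + s ^ 2 = 1) {n : ℕ}
    (hn : 1 ≤ n) : (c + s / n) ^ n ≤ c + s := by
  rcases le_or_gt n 3 with hn3 | hn4
  · interval_cases n
    · simp
    · nlinarith [sq_nonneg (s - c), sq_nonneg (c + s - 1), mul_nonneg hc (sub_nonneg.2 hcs)]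
    · nlinarith [sq_nonneg (s - c), sq_nonneg (c + s - 1), mul_nonneg hc (sub_nonneg.2 hcs),
        mul_nonneg (mul_nonneg hc hc) (sub_nonneg.2 hcs)]
  · have hn0 : (4 : ℝ) ≤ n := by exact_mod_cast hn4
    have hs : 0 ≤ s := hc.trans hcs
    have hdiv : s / n ≤ s / 4 := div_le_div_of_nonneg_left hs (by norm_num) hn0
    have hu1 : c + s / n ≤ 1 := by nlinarith
    calc (c + s / n) ^ n ≤ c + s / n := pow_le_of_le_one (by positivity) hu1 (by omega)
      _ ≤ c + s := by gcongr; linarith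

theorem two_mul_pow_add_sub_mul_add_div_pow_le_one (hc : 0 ≤ c) (hs : 0 ≤ s)
    (hunit : c ^ 2 + s ^ 2 = 1) {n : ℕ} (hn : 1 ≤ n) :
    2 * c ^ (n + 1) + (s - c) * (c + s / n) ^ n ≤ 1 := by
  rcases le_total s c with hsc | hcs
  · obtain ⟨m, rfl⟩ : ∃ m, n = m + 1 := ⟨n - 1, by omega⟩
    have hbern : c ^ (m + 1) + c ^ m * s ≤ (c + s / (m + 1)) ^ (m + 1) := by
      have hcancel : (m + 1 : ℝ) * c ^ m * (s / (m + 1)) = c ^ m * s := by field_simp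
      simpa only [hcancel] using
        pow_succ_add_mul_pow_le_add_pow hc (t := s / (m + 1)) (by positivity) m
    push_cast
    calc 2 * c ^ (m + 1 + 1) + (s - c) * (c + s / (m + 1)) ^ (m + 1)
        ≤ 2 * c ^ (m + 1 + 1) + (s - c) * (c ^ (m + 1) + c ^ m * s) := by
          linarith [mul_le_mul_of_nonpos_left hbern (sub_nonpos.2 hsc)]
      _ = c ^ m * (c ^ 2 + s ^ 2) := by ring
      _ ≤ 1 := by rw [hunit, mul_one]; exact pow_le_one₀ hc (by nlinarith)
  · have hc1 : c ^ (n + 1) ≤ c ^ 2 := pow_le_pow_of_le_one hc (by nlinarith) (by omega)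
    nlinarith [mul_le_mul_of_nonneg_left (add_div_pow_le_add hc hcs hunit hn) (sub_nonneg.2 hcs)]

end UnitCircle

theorem stmt_10 (r : ℕ) (hr : 2 ≤ r) (θ : ℝ) (hθ : θ ∈ Set.Icc 0 (π / 2)) :
    Real.cos θ ^ r
      + ∑ ℓ ∈ Finset.Icc 2 r,
          (1 / ((r : ℝ) - 1)) ^ ℓ * ((ℓ : ℝ) - 1) * (r.choose ℓ : ℝ)
            * Real.cos θ ^ (r - ℓ) * Real.sin θ ^ ℓ
    ≤ 1 := by
  obtain ⟨hθ0, hθ1⟩ := hθ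
  obtain ⟨n, rfl⟩ : ∃ n, r = n + 1 := ⟨r - 1, by omega⟩
  have hc : 0 ≤ cos θ := cos_nonneg_of_mem_Icc ⟨by linarith [pi_pos], hθ1⟩
  have hs : 0 ≤ sin θ := sin_nonneg_of_nonneg_of_le_pi hθ0 (by linarith [pi_pos])
  have hn : (n : ℝ) ≠ 0 := Nat.cast_ne_zero.2 (by omega)
  have hterm : ∀ ℓ ∈ Icc 2 (n + 1),
      (1 / (((n + 1 : ℕ) : ℝ) - 1)) ^ ℓ * ((ℓ : ℝ) - 1) * ((n + 1).choose ℓ : ℝ)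
          * cos θ ^ (n + 1 - ℓ) * sin θ ^ ℓ
        = ((ℓ : ℝ) - 1) * ((n + 1).choose ℓ : ℝ) * cos θ ^ (n + 1 - ℓ) * (sin θ / n) ^ ℓ := by
    intro ℓ _
    rw [Nat.cast_succ, add_sub_cancel_right, div_pow, div_pow, one_pow]
    ring
  rw [sum_congr rfl hterm, sum_Icc_two_sub_one_mul_choose_mul_pow, Nat.add_sub_cancel]
  calc cos θ ^ (n + 1) + (((n + 1 : ℕ) : ℝ) * (sin θ / n) * (sin θ / n + cos θ) ^ n
          - (sin θ / n + cos θ) ^ (n + 1) + cos θ ^ (n + 1))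
      = 2 * cos θ ^ (n + 1) + (sin θ - cos θ) * (cos θ + sin θ / n) ^ n := by
        push_cast
        linear_combination (sin θ / n + cos θ) ^ n * mul_div_cancel₀ (sin θ) hn
    _ ≤ 1 := two_mul_pow_add_sub_mul_add_div_pow_le_one hc hs (by linarith [sin_sq_add_cos_sq θ])
        (by omega)
end

section
/- (Maclaurin–Cauchy–Schwarz step) Let a_1, …, a_r and b_1, …, b_r be nonnegative reals, 1 ≤ ℓ ≤ r. Then ∑_{I ⊂ {1,…,r}, |I|=ℓ} (∏_{j∉I} a_j)(∏_{k∈I} b_k) ≤ C(r,ℓ) · ((∑_j a_j²)/r)^{(r−ℓ)/2} · ((∑_k b_k²)/r)^{ℓ/2}, where a_j = |u_j| and b_k = |v_k| in the application, i.e. the sum over all ℓ-subsets I of {1,…,r} of the mixed products is bounded by the stated binomial expression. -/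
/-!
Cauchy–Schwarz over the `ℓ`-subsets `I` bounds the sum by the geometric mean of
`∑_I ∏_{j ∉ I} a_j²` and `∑_I ∏_{k ∈ I} b_k²`, which are the elementary symmetric functions
`e_{r-ℓ}` and `e_ℓ` of the squares. Both are controlled by the Maclaurin-type bound
`e_k(x) ≤ C(n, k) (∑ x / n) ^ k` for nonnegative `x`. That bound follows by induction on the
number of variables from `e_{k+1}(a, x) = e_{k+1}(x) + a e_k(x)`: with `m` the old mean and `μ` the
new one, the tangent line of `t ↦ t ^ (k + 1)` at `m` together with Pascal's rule turns the
inductive bound into `C(n + 1, k + 1) μ ^ (k + 1)`.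
-/

open Finset

theorem Multiset.esymm_cons_succ {R : Type*} [CommSemiring R] (a : R) (s : Multiset R) (k : ℕ) :
    (a ::ₘ s).esymm (k + 1) = s.esymm (k + 1) + a * s.esymm k := by
  simp only [Multiset.esymm, Multiset.powersetCard_cons, Multiset.map_add, Multiset.sum_add,
    Multiset.map_map, Function.comp_def, Multiset.prod_cons, Multiset.sum_map_mul_left]

/-- The tangent line of `t ↦ t ^ (n + 1)` at `y` lies below its graph on `[0, ∞)`. -/
theorem pow_mul_succ_mul_sub_le_pow_succ {x y : ℝ} (hx : 0 ≤ x) (hy : 0 ≤ y) (n : ℕ) :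
    y ^ n * ((n + 1) * x - n * y) ≤ x ^ (n + 1) := by
  rcases hy.eq_or_lt with rfl | hy
  · rcases n with _ | n <;> simp [pow_nonneg hx]
  have bernoulli :=
    one_add_mul_sub_le_pow (by linarith [div_nonneg hx hy.le] : -1 ≤ x / y) (n + 1)
  have hyn : 0 < y ^ (n + 1) := pow_pos hy _
  calc y ^ n * ((n + 1) * x - n * y) = y ^ (n + 1) * (1 + (n + 1 : ℕ) * (x / y - 1)) := by
        field_simp
        push_cast
        ring
    _ ≤ y ^ (n + 1) * (x / y) ^ (n + 1) := mul_le_mul_of_nonneg_left bernoulli hyn.le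
    _ = x ^ (n + 1) := by rw [← mul_pow, mul_div_cancel₀ _ hy.ne']

theorem Multiset.esymm_le_choose_mul_pow (s : Multiset ℝ) (hs : ∀ x ∈ s, 0 ≤ x) (k : ℕ) :
    s.esymm k ≤ (card s).choose k * (s.sum / card s) ^ k := by
  induction s using Multiset.induction_on generalizing k with
  | empty => cases k <;> simp [Multiset.esymm, Multiset.powersetCard_zero_right]
  | cons a s ih =>
    rcases k with _ | k
    · simp [Multiset.esymm]
    have ha : 0 ≤ a := hs a (Multiset.mem_cons_self a s)
    have ih := ih fun x hx => hs x (Multiset.mem_cons_of_mem hx)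
    set n := card s
    set m := s.sum / n
    set μ := (a + s.sum) / (n + 1)
    have hs0 : 0 ≤ s.sum := Multiset.sum_nonneg fun x hx => hs x (Multiset.mem_cons_of_mem hx)
    have hm : 0 ≤ m := by positivity
    have hμ : 0 ≤ μ := by positivity
    have hnm : n * m = s.sum := by
      rcases Nat.eq_zero_or_pos n with hn | hn
      · simp [hn, Multiset.card_eq_zero.mp hn]
      · exact mul_div_cancel₀ _ (by positivity)
    have hnμ : (n + 1) * μ = a + s.sum := mul_div_cancel₀ _ (by positivity)
    have pascal : ((n + 1).choose (k + 1) : ℝ) = n.choose k + n.choose (k + 1) := by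
      exact_mod_cast Nat.choose_succ_succ' n k
    have absorb : ((n + 1).choose (k + 1) : ℝ) * (k + 1) = (n + 1) * n.choose k := by
      exact_mod_cast (Nat.add_one_mul_choose_eq n k).symm
    calc (a ::ₘ s).esymm (k + 1) = s.esymm (k + 1) + a * s.esymm k := s.esymm_cons_succ a k
      _ ≤ n.choose (k + 1) * m ^ (k + 1) + a * (n.choose k * m ^ k) :=
          add_le_add (ih (k + 1)) (mul_le_mul_of_nonneg_left (ih k) ha)
      _ = (n + 1).choose (k + 1) * (m ^ k * ((k + 1) * μ - k * m)) := by
          clear_value m μ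
          linear_combination (m ^ k * (m - μ)) * absorb - (n.choose k * m ^ k) * hnμ
            + (n.choose k * m ^ k) * hnm - m ^ (k + 1) * pascal
      _ ≤ (n + 1).choose (k + 1) * μ ^ (k + 1) :=
          mul_le_mul_of_nonneg_left (pow_mul_succ_mul_sub_le_pow_succ hμ hm k) (by positivity)
      _ = _ := by simp [n, μ]

theorem Finset.sum_powersetCard_prod_le_choose_mul_pow {ι : Type*} (s : Finset ι) {f : ι → ℝ}
    (hf : ∀ i ∈ s, 0 ≤ f i) (k : ℕ) :
    ∑ t ∈ s.powersetCard k, ∏ i ∈ t, f i ≤ (#s).choose k * ((∑ i ∈ s, f i) / #s) ^ k := by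
  simpa [Finset.esymm_map_val] using (s.val.map f).esymm_le_choose_mul_pow (by simpa using hf) k

theorem Finset.sum_powersetCard_sdiff {ι M : Type*} [DecidableEq ι] [AddCommMonoid M]
    {s : Finset ι} {k : ℕ} (hk : k ≤ #s) (f : Finset ι → M) :
    ∑ t ∈ s.powersetCard k, f (s \ t) = ∑ t ∈ s.powersetCard (#s - k), f t := by
  refine sum_nbij' (s \ ·) (s \ ·) (fun t ht => ?_) (fun t ht => ?_) (fun t ht => ?_)
    (fun t ht => ?_) fun _ _ => rfl <;> rw [mem_powersetCard] at ht
  · rw [mem_powersetCard, card_sdiff_of_subset ht.1, ht.2]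
    exact ⟨sdiff_subset, rfl⟩
  · rw [mem_powersetCard, card_sdiff_of_subset ht.1, ht.2]
    exact ⟨sdiff_subset, by omega⟩
  · exact sdiff_sdiff_eq_self ht.1
  · exact sdiff_sdiff_eq_self ht.1

theorem stmt_13_general (r ℓ : ℕ) (hℓr : ℓ ≤ r)
    (a b : Fin r → ℝ) :
    ∑ I ∈ Finset.powersetCard ℓ (Finset.univ : Finset (Fin r)),
        (∏ j ∈ Finset.univ \ I, a j) * (∏ k ∈ I, b k)
    ≤ (r.choose ℓ : ℝ)
        * Real.sqrt ((∑ j, a j ^ 2) / (r : ℝ)) ^ (r - ℓ)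
        * Real.sqrt ((∑ k, b k ^ 2) / (r : ℝ)) ^ ℓ := by
  set A := (∑ j, a j ^ 2) / (r : ℝ)
  set B := (∑ k, b k ^ 2) / (r : ℝ)
  have hA :
      ∑ I ∈ powersetCard ℓ univ, (∏ j ∈ univ \ I, a j) ^ 2 ≤ r.choose ℓ * A ^ (r - ℓ) := by
    have h := (univ : Finset (Fin r)).sum_powersetCard_prod_le_choose_mul_pow
      (fun j _ => sq_nonneg (a j)) (#(univ : Finset (Fin r)) - ℓ)
    rw [← sum_powersetCard_sdiff (by simpa using hℓr)] at h
    simpa [prod_pow, Nat.choose_symm hℓr] using h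
  have hB : ∑ I ∈ powersetCard ℓ univ, (∏ k ∈ I, b k) ^ 2 ≤ r.choose ℓ * B ^ ℓ := by
    simpa [prod_pow] using (univ : Finset (Fin r)).sum_powersetCard_prod_le_choose_mul_pow
      (fun k _ => sq_nonneg (b k)) ℓ
  refine (le_abs_self _).trans (abs_le_of_sq_le_sq ?_ (by positivity))
  calc _ ≤ (∑ I ∈ powersetCard ℓ univ, (∏ j ∈ univ \ I, a j) ^ 2)
        * ∑ I ∈ powersetCard ℓ univ, (∏ k ∈ I, b k) ^ 2 := sum_mul_sq_le_sq_mul_sq _ _ _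
    _ ≤ (r.choose ℓ * A ^ (r - ℓ)) * (r.choose ℓ * B ^ ℓ) :=
        mul_le_mul hA hB (sum_nonneg fun _ _ => sq_nonneg _) (by positivity)
    _ = _ := by
        rw [mul_pow, mul_pow, pow_right_comm _ (r - ℓ), pow_right_comm _ ℓ,
          Real.sq_sqrt (by positivity), Real.sq_sqrt (by positivity)]
        ring

theorem stmt_13 (r ℓ : ℕ) (hr : 1 ≤ r) (hℓ : 1 ≤ ℓ) (hℓr : ℓ ≤ r)
    (a b : Fin r → ℝ) (ha : ∀ j, 0 ≤ a j) (hb : ∀ k, 0 ≤ b k) :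
    ∑ I ∈ Finset.powersetCard ℓ (Finset.univ : Finset (Fin r)),
        (∏ j ∈ Finset.univ \ I, a j) * (∏ k ∈ I, b k)
    ≤ (r.choose ℓ : ℝ)
        * Real.sqrt ((∑ j, a j ^ 2) / (r : ℝ)) ^ (r - ℓ)
        * Real.sqrt ((∑ k, b k ^ 2) / (r : ℝ)) ^ ℓ :=
  stmt_13_general r ℓ hℓr a b
end

section
/- For all integers r ≥ 2 and 1 ≤ j ≤ r, the product ∏_{k=1}^{j} (2r − 2j + 2k − 1)/(r − 1) is at most 3 · 2^{j−1}. -/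
/-!
Every factor is nonnegative because `j ≤ r`. The factors with `k < j` have numerator at most
`2r - 3 < 2(r - 1)`, so they are at most `2`, and the last factor `(2r - 1)/(r - 1)` is at most `3`
as soon as `r ≥ 2`.
-/

section Factor

variable {r j k : ℝ}

lemma factor_nonneg (hr : 1 < r) (hjr : j ≤ r) (hk : 1 ≤ k) :
    0 ≤ (2 * r - 2 * j + 2 * k - 1) / (r - 1) :=
  div_nonneg (by linarith) (by linarith)

lemma factor_le_two (hr : 1 < r) (hkj : k + 1 ≤ j) :
    (2 * r - 2 * j + 2 * k - 1) / (r - 1) ≤ 2 := by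
  rw [div_le_iff₀ (by linarith)]
  linarith

lemma factor_le_three (hr : 2 ≤ r) (hkj : k ≤ j) :
    (2 * r - 2 * j + 2 * k - 1) / (r - 1) ≤ 3 := by
  rw [div_le_iff₀ (by linarith)]
  linarith

end Factor

theorem stmt_15 (r j : ℕ) (hr : 2 ≤ r) (hj : 1 ≤ j) (hjr : j ≤ r) :
    ∏ k ∈ Finset.Icc 1 j,
        ((2 * (r : ℝ) - 2 * (j : ℝ) + 2 * (k : ℝ) - 1) / ((r : ℝ) - 1))
      ≤ 3 * 2 ^ (j - 1) := by
  obtain ⟨m, rfl⟩ := Nat.exists_eq_add_of_le' hj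
  have hr₂ : (2 : ℝ) ≤ r := by exact_mod_cast hr
  have hr₁ : (1 : ℝ) < r := by linarith
  have hjr' : ((m + 1 : ℕ) : ℝ) ≤ r := by exact_mod_cast hjr
  have hk₁ {k : ℕ} (hk : k ∈ Finset.Icc 1 (m + 1)) : (1 : ℝ) ≤ k := by
    exact_mod_cast (Finset.mem_Icc.mp hk).1
  have hlow : ∏ k ∈ Finset.Icc 1 m,
      ((2 * (r : ℝ) - 2 * ((m + 1 : ℕ) : ℝ) + 2 * (k : ℝ) - 1) / ((r : ℝ) - 1)) ≤ 2 ^ m := by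
    calc _ ≤ ∏ _k ∈ Finset.Icc 1 m, (2 : ℝ) := by
          refine Finset.prod_le_prod (fun k hk => ?_) (fun k hk => ?_)
          · exact factor_nonneg hr₁ hjr' (hk₁ (Finset.Icc_subset_Icc_right m.le_succ hk))
          · have hkm : k + 1 ≤ m + 1 := Nat.succ_le_succ (Finset.mem_Icc.mp hk).2
            exact factor_le_two hr₁ (by exact_mod_cast hkm)
      _ = 2 ^ m := by simp
  have hlast_mem : m + 1 ∈ Finset.Icc 1 (m + 1) := Finset.right_mem_Icc.mpr m.succ_pos
  rw [Finset.prod_Icc_succ_top (by omega), Nat.add_sub_cancel, mul_comm 3]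
  exact mul_le_mul hlow (factor_le_three hr₂ le_rfl) (factor_nonneg hr₁ hjr' (hk₁ hlast_mem))
    (by positivity)
end

section
/- Let f: Ω ⊆ ℝⁿ → ℝ be a C² function and define Θ(f) = (1+|∇f|²)^{-1/2} dx₁∧⋯∧dxₙ + dy ∧ ((1+|∇f|²)^{-1/2} * df) on Ω × ℝ, where * is the Hodge star on ℝⁿ. Then dΘ(f) = 0 if and only if f solves the minimal surface equation div(∇f/√(1+|∇f|²)) = 0. -/
/-!
On vectors `v`, `Θ(f)` at a point is `det [N; v]`, where `N = (1, -∇f)/√(1+|∇f|²)` is the unit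
normal of the graph. Differentiating along the constant fields `vᵢ`, the alternating sum defining
`dΘ(v₀,…,vₙ)` becomes `∑ᵢ det(B with row i replaced by DN·vᵢ)`, where `B` has rows `vᵢ`; by
Cramer's rule this is `tr(DN) · det B`, and `tr(DN) = -div(∇f/√(1+|∇f|²))`. Taking `B = 1` gives
the converse.
-/

open Real

/-- `i`-th partial derivative of `f : ℝⁿ → ℝ`. -/
noncomputable def pd {n : ℕ} (f : (Fin n → ℝ) → ℝ) (x : Fin n → ℝ) (i : Fin n) : ℝ :=
  fderiv ℝ f x (Pi.single i 1)

/-- `√(1 + |∇f|²)`. -/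
noncomputable def Wf {n : ℕ} (f : (Fin n → ℝ) → ℝ) (x : Fin n → ℝ) : ℝ :=
  Real.sqrt (1 + ∑ i, pd f x i ^ 2)

/-- The value of the `n`-form `Θ(f)` on `ℝ × ℝⁿ` (the first coordinate is `y`) evaluated at the
point `p` on the `n`-tuple of vectors `v`.  In coordinates `(y, x₁, …, xₙ)` it is the determinant
of the `(n+1)×(n+1)` matrix whose first row is the unit vector `(1, -∇f)/√(1+|∇f|²)` and whose
remaining rows are the vectors `v i`; this coincides with
`(1+|∇f|²)^{-1/2} dx₁∧⋯∧dxₙ + dy ∧ ((1+|∇f|²)^{-1/2} * df)`. -/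
noncomputable def ThetaVal {n : ℕ} (f : (Fin n → ℝ) → ℝ)
    (p : ℝ × (Fin n → ℝ)) (v : Fin n → ℝ × (Fin n → ℝ)) : ℝ :=
  Matrix.det (Matrix.of fun i j : Fin (n + 1) =>
    Fin.cases
      (Fin.cases (1 / Wf f p.2) (fun j' => -(pd f p.2 j') / Wf f p.2) j)
      (fun i' => Fin.cases ((v i').1) (fun j' => (v i').2 j') j) i)

namespace Matrix

variable {ι R : Type*} [Fintype ι] [DecidableEq ι] [CommRing R]

theorem sum_det_updateRow_mulVec (A B : Matrix ι ι R) :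
    ∑ i, (B.updateRow i (A *ᵥ B i)).det = A.trace * B.det := by
  have h_cramer (i : ι) (w : ι → R) : (B.updateRow i w).det = (Bᵀ.adjugate *ᵥ w) i := by
    rw [← cramer_eq_adjugate_mulVec, cramer_transpose_apply]
  calc ∑ i, (B.updateRow i (A *ᵥ B i)).det
      = (Bᵀ.adjugate * A * Bᵀ).trace := by
        simp only [h_cramer, mulVec_mulVec]
        rfl
    _ = (Bᵀ * Bᵀ.adjugate * A).trace := trace_mul_cycle _ _ _
    _ = A.trace * B.det := by
        rw [mul_adjugate, det_transpose, smul_mul, one_mul, trace_smul, smul_eq_mul, mul_comm]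

theorem det_of_cons_succAbove {n : ℕ} (M : Matrix (Fin (n + 1)) (Fin (n + 1)) R)
    (i : Fin (n + 1)) (w : Fin (n + 1) → R) :
    (of (Fin.cons w fun j => M (i.succAbove j))).det = (-1) ^ (i : ℕ) * (M.updateRow i w).det := by
  have h_perm : of (Fin.cons w fun j => M (i.succAbove j))
      = (M.updateRow i w).submatrix i.cycleRange.symm id := by
    ext k l
    cases k using Fin.cases with
    | zero => simp [Fin.cycleRange_symm_zero]
    | succ k => simp [Fin.cycleRange_symm_succ]
  rw [h_perm, det_permute, Equiv.Perm.sign_symm, Fin.sign_cycleRange]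
  push_cast
  rfl

theorem trace_toMatrix'_comp_funLeft_succ {n : ℕ}
    (L : (Fin n → R) →ₗ[R] Fin (n + 1) → R) :
    (LinearMap.toMatrix' (L ∘ₗ LinearMap.funLeft R R Fin.succ)).trace
      = ∑ j, L (Pi.single j 1) j.succ := by
  have h_zero : (Pi.single 0 1 : Fin (n + 1) → R) ∘ Fin.succ = 0 :=
    funext fun j => Pi.single_eq_of_ne (Fin.succ_ne_zero j) 1
  have h_succ (j : Fin n) : (Pi.single j.succ 1 : Fin (n + 1) → R) ∘ Fin.succ = Pi.single j 1 :=
    funext fun k => by simp [Pi.single_apply]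
  simp [trace, Fin.sum_univ_succ, LinearMap.funLeft, h_zero, h_succ]

end Matrix

section MinimalSurface

open Matrix

variable {n : ℕ} {f : (Fin n → ℝ) → ℝ}

noncomputable def unitNormal (f : (Fin n → ℝ) → ℝ) (x : Fin n → ℝ) : Fin (n + 1) → ℝ :=
  Fin.cons (1 / Wf f x) fun j => -pd f x j / Wf f x

noncomputable def minimalSurfaceOperator (f : (Fin n → ℝ) → ℝ) (x : Fin n → ℝ) : ℝ :=
  ∑ i, fderiv ℝ (fun z => pd f z i / Wf f z) x (Pi.single i 1)

def frameMatrix {m : ℕ} (v : Fin m → ℝ × (Fin n → ℝ)) : Matrix (Fin m) (Fin (n + 1)) ℝ :=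
  of fun k => Fin.consEquiv _ (v k)

theorem wf_pos (f : (Fin n → ℝ) → ℝ) (x : Fin n → ℝ) : 0 < Wf f x :=
  Real.sqrt_pos.2 (by positivity)

theorem differentiableAt_unitNormal {x : Fin n → ℝ} (hf : ContDiffAt ℝ 2 f x) :
    DifferentiableAt ℝ (unitNormal f) x := by
  have hpd (j : Fin n) : DifferentiableAt ℝ (fun z => pd f z j) x :=
    ((hf.fderiv_right (m := 1) (by norm_num)).differentiableAt one_ne_zero).clm_apply
      (differentiableAt_const _)
  have h_pos : (0 : ℝ) < 1 + ∑ j, pd f x j ^ 2 := by positivity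
  have hW : DifferentiableAt ℝ (Wf f) x := by
    unfold Wf
    exact DifferentiableAt.sqrt (by fun_prop) h_pos.ne'
  refine differentiableAt_pi.2 fun k => ?_
  cases k using Fin.cases with
  | zero =>
    show DifferentiableAt ℝ (fun z => 1 / Wf f z) x
    fun_prop (disch := exact (wf_pos f x).ne')
  | succ j =>
    show DifferentiableAt ℝ (fun z => -pd f z j / Wf f z) x
    fun_prop (disch := exact (wf_pos f x).ne')

theorem fderiv_unitNormal_apply_succ {x : Fin n → ℝ} (hN : DifferentiableAt ℝ (unitNormal f) x)
    (u : Fin n → ℝ) (j : Fin n) :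
    fderiv ℝ (unitNormal f) x u j.succ = -fderiv ℝ (fun z => pd f z j / Wf f z) x u := by
  have h_comp : (fun z => unitNormal f z j.succ) = fun z => -(pd f z j / Wf f z) := by
    funext z
    simp [unitNormal, neg_div]
  rw [← _root_.neg_apply, ← fderiv_fun_neg, ← h_comp,
    (hasFDerivAt_pi'.1 hN.hasFDerivAt j.succ).fderiv]
  rfl

theorem thetaVal_eq_det (q : ℝ × (Fin n → ℝ)) (w : Fin n → ℝ × (Fin n → ℝ)) :
    ThetaVal f q w = (of (Fin.cons (unitNormal f q.2) (frameMatrix w))).det := by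
  unfold ThetaVal
  congr 1
  ext i j
  cases i using Fin.cases <;> rfl

theorem thetaVal_succAbove (q : ℝ × (Fin n → ℝ)) (v : Fin (n + 1) → ℝ × (Fin n → ℝ))
    (i : Fin (n + 1)) :
    ThetaVal f q (fun j => v (i.succAbove j))
      = (-1) ^ (i : ℕ) * ((frameMatrix v).updateRow i (unitNormal f q.2)).det := by
  rw [thetaVal_eq_det]
  exact det_of_cons_succAbove (frameMatrix v) i _

theorem fderiv_thetaVal_succAbove {p : ℝ × (Fin n → ℝ)}
    (hN : DifferentiableAt ℝ (unitNormal f) p.2) (v : Fin (n + 1) → ℝ × (Fin n → ℝ))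
    (i : Fin (n + 1)) :
    fderiv ℝ (fun q => ThetaVal f q fun j => v (i.succAbove j)) p (v i)
      = (-1) ^ (i : ℕ) *
        ((frameMatrix v).updateRow i (fderiv ℝ (unitNormal f) p.2 (v i).2)).det := by
  let D : (Fin (n + 1) → ℝ) →L[ℝ] ℝ :=
    (detRowAlternating.toMultilinearMap.toLinearMap (frameMatrix v) i).toContinuousLinearMap
  have hD : HasFDerivAt (fun q : ℝ × (Fin n → ℝ) => ThetaVal f q fun j => v (i.succAbove j))
      (((-1) ^ (i : ℕ) : ℝ) • D.comp
        ((fderiv ℝ (unitNormal f) p.2).comp (ContinuousLinearMap.snd ℝ ℝ _))) p := by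
    simp only [thetaVal_succAbove]
    exact (D.hasFDerivAt.comp p (hN.hasFDerivAt.comp p hasFDerivAt_snd)).const_mul _
  rw [hD.fderiv]
  rfl

theorem sum_fderiv_thetaVal_succAbove {p : ℝ × (Fin n → ℝ)}
    (hN : DifferentiableAt ℝ (unitNormal f) p.2) (v : Fin (n + 1) → ℝ × (Fin n → ℝ)) :
    ∑ i : Fin (n + 1), (-1 : ℝ) ^ (i : ℕ) *
        fderiv ℝ (fun q => ThetaVal f q fun j => v (i.succAbove j)) p (v i)
      = -minimalSurfaceOperator f p.2 * (frameMatrix v).det := by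
  -- `Θ` does not depend on `y`, so `D(q ↦ N q.2)` is `DN` after dropping the first coordinate.
  set L := (fderiv ℝ (unitNormal f) p.2).toLinearMap ∘ₗ LinearMap.funLeft ℝ ℝ Fin.succ
  have hL (k : Fin (n + 1)) :
      LinearMap.toMatrix' L *ᵥ frameMatrix v k = fderiv ℝ (unitNormal f) p.2 (v k).2 := by
    rw [LinearMap.toMatrix'_mulVec]
    rfl
  calc _ = ∑ i, ((frameMatrix v).updateRow i (LinearMap.toMatrix' L *ᵥ frameMatrix v i)).det := by
        simp only [fderiv_thetaVal_succAbove hN, hL, ← mul_assoc, ← mul_pow]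
        norm_num
    _ = (LinearMap.toMatrix' L).trace * (frameMatrix v).det :=
        sum_det_updateRow_mulVec _ _
    _ = _ := by
        simp only [L, trace_toMatrix'_comp_funLeft_succ, ContinuousLinearMap.coe_coe,
          fderiv_unitNormal_apply_succ hN, Finset.sum_neg_distrib, minimalSurfaceOperator]

end MinimalSurface

/-- Codimension-one case: `dΘ(f) = 0` on `Ω × ℝ` if and only if `f` solves the minimal surface
equation `div(∇f/√(1+|∇f|²)) = 0` on `Ω`.  The exterior derivative is expressed through the
standard formula `dΘ(p)(v₀,…,vₙ) = ∑ᵢ (−1)ⁱ (D_{vᵢ}Θ)(p)(v₀,…,v̂ᵢ,…,vₙ)`. -/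
theorem stmt_19 (n : ℕ) (Ω : Set (Fin n → ℝ)) (hΩ : IsOpen Ω)
    (f : (Fin n → ℝ) → ℝ) (hf : ContDiffOn ℝ 2 f Ω) :
    (∀ p : ℝ × (Fin n → ℝ), p.2 ∈ Ω →
        ∀ v : Fin (n + 1) → ℝ × (Fin n → ℝ),
          ∑ i : Fin (n + 1), (-1 : ℝ) ^ (i : ℕ) *
            fderiv ℝ (fun q => ThetaVal f q (fun j => v (i.succAbove j))) p (v i) = 0)
    ↔ (∀ x ∈ Ω, ∑ i, fderiv ℝ (fun z => pd f z i / Wf f z) x (Pi.single i 1) = 0) := by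
  have hN (x : Fin n → ℝ) (hx : x ∈ Ω) : DifferentiableAt ℝ (unitNormal f) x :=
    differentiableAt_unitNormal (hf.contDiffAt (hΩ.mem_nhds hx))
  constructor
  · intro h_closed x hx
    let e : Fin (n + 1) → ℝ × (Fin n → ℝ) := fun k =>
      (Fin.consEquiv fun _ => ℝ).symm (Pi.single k 1)
    have h_frame : frameMatrix e = 1 := by
      simp only [frameMatrix, e, Equiv.apply_symm_apply]
      ext k l
      simp [Matrix.one_apply, Pi.single_apply, eq_comm]
    have := sum_fderiv_thetaVal_succAbove (p := (0, x)) (hN x hx) e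
    rw [h_closed (0, x) hx e, h_frame, Matrix.det_one] at this
    simpa [minimalSurfaceOperator] using this.symm
  · intro h_mse p hp v
    rw [sum_fderiv_thetaVal_succAbove (hN p.2 hp) v]
    simp [minimalSurfaceOperator, h_mse p.2 hp]
end
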